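/- arXiv:2102.01616 — 6 statements merged into one kernel-verified Lean document; each statement's English description precedes it below -/
import Mathlib

section
/- Let f : ℝ → ℝ. Condition (A1)(i) — that there exist constants K > 0 and η* > 0 such that for every η ∈ (0, η*) and every x ∈ ℝ one has sup_{y ∈ [x, x+η)} |f(y)| ≥ η^K and sup_{y ∈ (x−η, x]} |f(y)| ≥ η^K — holds if and only if condition (A4) holds, i.e. there exist constants K' > 0 and η*' > 0 such that for every η ∈ (0, η*') and every x ∈ ℝ one has sup_{y ∈ (x, x+η)} |f(y)| ≥ η^{K'}. -/
open Set

private lemma biSup_subset_le {s t : Set ℝ} (h : s ⊆ t) (g : ℝ → EReal) :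
    (⨆ y ∈ s, g y) ≤ ⨆ y ∈ t, g y :=
  biSup_mono h

/-- condition (A1)(i) holds iff condition (A4) holds, where (A4) uses the
supremum of `|f|` over the open interval `(x, x+η)`. Suprema are taken in the extended reals. -/
theorem stmt_1 (f : ℝ → ℝ) :
    (∃ K > (0:ℝ), ∃ ηs > (0:ℝ), ∀ η ∈ Ioo (0:ℝ) ηs, ∀ x : ℝ,
      (((η ^ K : ℝ) : EReal) ≤ ⨆ y ∈ Ico x (x + η), ((|f y| : ℝ) : EReal)) ∧
      (((η ^ K : ℝ) : EReal) ≤ ⨆ y ∈ Ioc (x - η) x, ((|f y| : ℝ) : EReal)))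
    ↔
    (∃ K > (0:ℝ), ∃ ηs > (0:ℝ), ∀ η ∈ Ioo (0:ℝ) ηs, ∀ x : ℝ,
      ((η ^ K : ℝ) : EReal) ≤ ⨆ y ∈ Ioo x (x + η), ((|f y| : ℝ) : EReal)) := by
  constructor
  · rintro ⟨K, hK, ηs, hηs, h⟩
    set c : ℝ := (1/2 : ℝ) ^ K with hc
    have hcpos : 0 < c := Real.rpow_pos_of_pos (by norm_num) K
    refine ⟨K + 1, by linarith, min ηs c, lt_min hηs hcpos, ?_⟩
    rintro η ⟨hη0, hηlt⟩ x
    have hηs' : η < ηs := lt_of_lt_of_le hηlt (min_le_left _ _)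
    have hηc : η ≤ c := le_of_lt (lt_of_lt_of_le hηlt (min_le_right _ _))
    have h2 : η / 2 ∈ Ioo (0:ℝ) ηs := ⟨by linarith, by linarith⟩
    have := (h (η/2) h2 (x + η/2)).1
    have hset : Ico (x + η/2) (x + η/2 + η/2) ⊆ Ioo x (x + η) := by
      intro y hy
      constructor <;> [linarith [hy.1]; skip]
      have := hy.2; linarith
    have hsup : (((( η/2) ^ K : ℝ)) : EReal) ≤ ⨆ y ∈ Ioo x (x + η), ((|f y| : ℝ) : EReal) :=
      le_trans this (biSup_subset_le hset _)
    refine le_trans ?_ hsup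
    have key : η ^ (K + 1) ≤ (η / 2) ^ K := by
      have h1 : (η:ℝ) ^ (K + 1) = η ^ K * η := by
        rw [Real.rpow_add hη0, Real.rpow_one]
      have h2' : (η / 2 : ℝ) ^ K = η ^ K * c := by
        rw [hc, ← Real.mul_rpow (le_of_lt hη0) (by norm_num)]
        ring_nf
      rw [h1, h2']
      exact mul_le_mul_of_nonneg_left hηc (le_of_lt (Real.rpow_pos_of_pos hη0 K))
    exact_mod_cast key
  · rintro ⟨K, hK, ηs, hηs, h⟩
    refine ⟨K, hK, ηs, hηs, ?_⟩
    rintro η hη x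
    constructor
    · refine le_trans (h η hη x) (biSup_subset_le ?_ _)
      exact Ioo_subset_Ico_self
    · refine le_trans (h η hη (x - η)) (biSup_subset_le ?_ _)
      have : x - η + η = x := by ring
      rw [this]
      exact Ioo_subset_Ioc_self
end

section
/- Let d ∈ ℕ, d ≥ 1, and let f : ℝ → ℝ be d times continuously differentiable. Suppose there exist positive constants η₀ and δ such that for every x ∈ ℝ there exists an index i with 0 ≤ i ≤ d such that inf_{y ∈ [x, x+η₀]} |f^{(i)}(y)| ≥ δ. Then condition (A1)(i) holds: there exist constants K > 0 and η* > 0 such that for every η ∈ (0, η*) and every x ∈ ℝ one has sup_{y ∈ [x, x+η)} |f(y)| ≥ η^K and sup_{y ∈ (x−η, x]} |f(y)| ≥ η^K. -/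
/-!
If `|f| < η ^ (d + 1)` on `[a, a + i h]` with `h = η / (d + 1)`, then `i` forward differences
of step `h` give `|Δ_[h]^i f| < 2 ^ i η ^ (d + 1)` there, and by the mean value theorem
`Δ_[h]^i f` is `h ^ i` times a value of `f⁽ⁱ⁾`. For the index `i ≤ d` with `|f⁽ⁱ⁾| ≥ δ` this
forces `δ (η / (2 (d + 1))) ^ d < η ^ (d + 1)`, which fails for small `η`. Both half-open
intervals of length `η` contain an interval `[a, a + d h]`, whatever `i` the hypothesis supplies
at `a`.
-/

open Set fwdDiff

theorem iteratedDeriv_fwdDiff {𝕜 F : Type*} [NontriviallyNormedField 𝕜] [NormedAddCommGroup F]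
    [NormedSpace 𝕜 F] {n : ℕ} {g : 𝕜 → F} (hg : ContDiff 𝕜 n g) (h : 𝕜) :
    iteratedDeriv n (Δ_[h] g) = Δ_[h] (iteratedDeriv n g) := by
  have hshift : ContDiff 𝕜 n fun x ↦ g (x + h) := hg.comp (contDiff_id.add contDiff_const)
  ext x
  change iteratedDeriv n (fun y ↦ g (y + h) - g y) x = _
  rw [iteratedDeriv_fun_sub hshift.contDiffAt hg.contDiffAt, iteratedDeriv_comp_add_const]
  rfl

theorem exists_fwdDiff_eq_mul_deriv {φ : ℝ → ℝ} (hφ : Differentiable ℝ φ) {h : ℝ} (hh : 0 < h)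
    (x : ℝ) : ∃ c ∈ Ioo x (x + h), Δ_[h] φ x = h * deriv φ c := by
  obtain ⟨c, hc, hslope⟩ := exists_deriv_eq_slope φ (lt_add_of_pos_right x hh)
    hφ.continuous.continuousOn hφ.differentiableOn
  refine ⟨c, hc, ?_⟩
  rw [hslope, add_sub_cancel_left, mul_div_cancel₀ _ hh.ne']
  rfl

-- Apply the induction hypothesis to `Δ_[h] g`, which is bounded by `2 ε` on `[a, a + n h]`.
theorem exists_abs_iteratedDeriv_mul_pow_lt {n : ℕ} {g : ℝ → ℝ} (hg : ContDiff ℝ n g)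
    {a h ε : ℝ} (hh : 0 < h) (hgε : ∀ y ∈ Icc a (a + n * h), |g y| < ε) :
    ∃ ξ ∈ Icc a (a + n * h), |iteratedDeriv n g ξ| * h ^ n < 2 ^ n * ε := by
  induction n generalizing g ε with
  | zero => exact ⟨a, by simp, by simpa using hgε a (by simp)⟩
  | succ n ih =>
    push_cast at hgε ⊢
    have hΔε : ∀ y ∈ Icc a (a + n * h), |Δ_[h] g y| < 2 * ε := fun y ⟨hay, hyn⟩ ↦
      calc |g (y + h) - g y| ≤ |g (y + h)| + |g y| := abs_sub _ _
        _ < ε + ε := add_lt_add (hgε _ ⟨by linarith, by linarith⟩) (hgε _ ⟨hay, by linarith⟩)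
        _ = 2 * ε := by ring
    have hgn : ContDiff ℝ n g := hg.of_le (by norm_cast; omega)
    obtain ⟨ξ, ⟨haξ, hξn⟩, hξ⟩ :=
      ih (g := Δ_[h] g) ((hgn.comp (contDiff_id.add contDiff_const)).sub hgn) hΔε
    obtain ⟨c, ⟨hξc, hcξ⟩, hc⟩ :=
      exists_fwdDiff_eq_mul_deriv (hg.differentiable_iteratedDeriv' n) hh ξ
    refine ⟨c, ⟨by linarith, by linarith⟩, ?_⟩
    rw [iteratedDeriv_fwdDiff hgn, hc, ← iteratedDeriv_succ, abs_mul, abs_of_pos hh] at hξ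
    calc |iteratedDeriv (n + 1) g c| * h ^ (n + 1)
        = h * |iteratedDeriv (n + 1) g c| * h ^ n := by ring
      _ < 2 ^ n * (2 * ε) := hξ
      _ = 2 ^ (n + 1) * ε := by ring

theorem exists_le_abs_of_le_abs_iteratedDeriv {n : ℕ} {g : ℝ → ℝ} (hg : ContDiff ℝ n g)
    {a h δ : ℝ} (hh : 0 < h) (hδ : ∀ y ∈ Icc a (a + n * h), δ ≤ |iteratedDeriv n g y|) :
    ∃ y ∈ Icc a (a + n * h), δ * (h / 2) ^ n ≤ |g y| := by
  by_contra! hg_small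
  obtain ⟨ξ, hξ, hξ_lt⟩ := exists_abs_iteratedDeriv_mul_pow_lt hg hh hg_small
  have : 2 ^ n * (δ * (h / 2) ^ n) = δ * h ^ n := by rw [div_pow]; field_simp
  rw [this] at hξ_lt
  exact (mul_le_mul_of_nonneg_right (hδ ξ hξ) (by positivity)).not_gt hξ_lt

theorem exists_pow_succ_le_abs {d : ℕ} {f : ℝ → ℝ} (hf : ContDiff ℝ d f) {η₀ δ η : ℝ}
    (hinf : ∀ x : ℝ, ∃ i ≤ d, ∀ y ∈ Icc x (x + η₀), δ ≤ |iteratedDeriv i f y|)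
    (hη : 0 < η) (hη₀ : η ≤ η₀) (hη1 : η ≤ 1) (hηδ : η ≤ δ / (2 * (d + 1)) ^ d) (a : ℝ) :
    ∃ y ∈ Icc a (a + d * (η / (d + 1))), η ^ (d + 1) ≤ |f y| := by
  set h := η / (d + 1) with h_def
  have hh : 0 < h := by positivity
  have hdh : d * h ≤ η := by
    rw [h_def, mul_div_assoc']
    exact div_le_of_le_mul₀ (by positivity) hη.le (by linarith)
  obtain ⟨i, hid, hi⟩ := hinf a
  have hih : i * h ≤ d * h := by gcongr
  obtain ⟨y, ⟨hay, hyi⟩, hy⟩ :=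
    exists_le_abs_of_le_abs_iteratedDeriv (hf.of_le (by exact_mod_cast hid)) hh
      fun y hy ↦ hi y ⟨hy.1, by linarith [hy.2]⟩
  refine ⟨y, ⟨hay, by linarith⟩, ?_⟩
  have hhη : h ≤ η := div_le_self hη.le (by simp)
  have hδ : 0 ≤ δ := by
    by_contra! hδ
    linarith [div_neg_of_neg_of_pos hδ (by positivity : (0 : ℝ) < (2 * (d + 1)) ^ d)]
  have hh2 : h / 2 = η / (2 * (d + 1)) := by rw [h_def]; field_simp
  calc η ^ (d + 1) = η * η ^ d := by ring
    _ ≤ δ / (2 * (d + 1)) ^ d * η ^ d := by gcongr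
    _ = δ * (h / 2) ^ d := by rw [hh2, div_pow]; ring
    _ ≤ δ * (h / 2) ^ i :=
        mul_le_mul_of_nonneg_left (pow_le_pow_of_le_one (by positivity) (by linarith) hid) hδ
    _ ≤ |f y| := hy

theorem stmt_2_general (d : ℕ) (f : ℝ → ℝ) (hf : ContDiff ℝ d f)
    (η₀ δ : ℝ) (hη₀ : 0 < η₀) (hδ : 0 < δ)
    (hinf : ∀ x : ℝ, ∃ i ≤ d, ∀ y ∈ Icc x (x + η₀), δ ≤ |iteratedDeriv i f y|) :
    ∃ K > (0:ℝ), ∃ ηs > (0:ℝ), ∀ η ∈ Ioo (0:ℝ) ηs, ∀ x : ℝ,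
      (((η ^ K : ℝ) : EReal) ≤ ⨆ y ∈ Ico x (x + η), ((|f y| : ℝ) : EReal)) ∧
      (((η ^ K : ℝ) : EReal) ≤ ⨆ y ∈ Ioc (x - η) x, ((|f y| : ℝ) : EReal)) := by
  refine ⟨d + 1, by positivity, min η₀ (min 1 (δ / (2 * (d + 1)) ^ d)), by positivity, ?_⟩
  rintro η ⟨hη, hηs⟩ x
  simp only [lt_min_iff] at hηs
  obtain ⟨hηη₀, hη1, hηδ⟩ := hηs
  have hlarge := exists_pow_succ_le_abs hf hinf hη hηη₀.le hη1.le hηδ.le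
  have hdh : d * (η / (d + 1)) < η := by
    rw [mul_div_assoc']
    exact (div_lt_iff₀ (by positivity)).2 (by linarith)
  rw [← Nat.cast_add_one, Real.rpow_natCast]
  constructor
  · obtain ⟨y, ⟨hxy, hyx⟩, hy⟩ := hlarge x
    exact le_iSup₂_of_le (f := fun y _ ↦ ((|f y| : ℝ) : EReal)) y ⟨hxy, by linarith⟩
      (EReal.coe_le_coe_iff.2 hy)
  · obtain ⟨y, ⟨hxy, hyx⟩, hy⟩ := hlarge (x - d * (η / (d + 1)))
    exact le_iSup₂_of_le (f := fun y _ ↦ ((|f y| : ℝ) : EReal)) y ⟨by linarith, by linarith⟩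
      (EReal.coe_le_coe_iff.2 hy)

/-- if `f` is `d` times continuously differentiable (`d ≥ 1`) and there exist
`η₀, δ > 0` such that for every `x` some derivative `f⁽ⁱ⁾` (`0 ≤ i ≤ d`) satisfies
`|f⁽ⁱ⁾| ≥ δ` on all of `[x, x+η₀]`, then condition (A1)(i) holds. -/
theorem stmt_2 (d : ℕ) (hd : 1 ≤ d) (f : ℝ → ℝ) (hf : ContDiff ℝ d f)
    (η₀ δ : ℝ) (hη₀ : 0 < η₀) (hδ : 0 < δ)
    (hinf : ∀ x : ℝ, ∃ i ≤ d, ∀ y ∈ Icc x (x + η₀), δ ≤ |iteratedDeriv i f y|) :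
    ∃ K > (0:ℝ), ∃ ηs > (0:ℝ), ∀ η ∈ Ioo (0:ℝ) ηs, ∀ x : ℝ,
      (((η ^ K : ℝ) : EReal) ≤ ⨆ y ∈ Ico x (x + η), ((|f y| : ℝ) : EReal)) ∧
      (((η ^ K : ℝ) : EReal) ≤ ⨆ y ∈ Ioc (x - η) x, ((|f y| : ℝ) : EReal)) :=
  stmt_2_general d f hf η₀ δ hη₀ hδ hinf
end

section
/- Let (Ω, F, P) be a probability space, p > 1, H ∈ (0,1), and let X : [0,∞) × Ω → ℝ be a jointly measurable stochastic process such that ∫₀^T |X_t|^p dt is well defined and finite almost surely for every T > 0. Assume: (i) X is self-similar with index H, i.e. for every c > 0, every n ∈ ℕ and all times t₁, …, t_n ≥ 0, the random vector (X_{c t₁}, …, X_{c t_n}) has the same distribution as (c^H X_{t₁}, …, c^H X_{t_n}); (ii) there exist a constant C > 0 and a nonnegative random variable ξ with P[ξ ≤ y] ≤ C y for all y ≥ 0, such that ∫₀^1 |X_t|^p dt ≥ ξ^p almost surely. Then for every ε ∈ (0, pH), almost surely liminf_{T→∞} T^{−1−ε} ∫₀^T |X_t|^p dt > 0. -/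
/-!
By self-similarity, `∫₀^c |X_t|^p dt = c ∫₀^1 |X_{cs}|^p ds` has the law of
`c^{1+pH} ∫₀^1 |X_s|^p ds ≥ c^{1+pH} ξ^p`, so
`P(∫₀^c |X_t|^p dt ≤ c^{1+ε}) ≤ P(ξ ≤ c^{(ε-pH)/p}) ≤ C c^{-(pH-ε)/p}`.
These bounds are summable along `c = 2^n`, so by Borel–Cantelli almost surely
`∫₀^{2^n} |X_t|^p dt > 2^{n(1+ε)}` for all large `n`, and monotonicity in `T` bridges the gaps
between powers of two.

That the law of a path integral is determined by the finite-dimensional distributions is the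
measure-theoretic core: for bounded paths, Fubini expresses its moments through the
finite-dimensional distributions, and a bounded random variable is determined by its moments
because its moment generating function is entire; truncation then reaches integrable paths.
-/

open Set Filter MeasureTheory ProbabilityTheory Topology

section

variable {Ω Ω' T : Type*} {mΩ : MeasurableSpace Ω} {mΩ' : MeasurableSpace Ω'}
  {mT : MeasurableSpace T} {μ : Measure Ω} {μ' : Measure Ω'} {ν : Measure T}

theorem integrableExpSet_eq_univ_of_norm_le [IsFiniteMeasure μ] {X : Ω → ℝ}
    (hXm : AEMeasurable X μ) {M : ℝ} (hXM : ∀ᵐ ω ∂μ, ‖X ω‖ ≤ M) :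
    integrableExpSet X μ = univ := by
  refine eq_univ_of_forall fun t => Integrable.of_bound (by fun_prop) (Real.exp (|t| * M)) ?_
  filter_upwards [hXM] with ω hω
  rw [Real.norm_eq_abs, Real.abs_exp, Real.exp_le_exp]
  calc t * X ω ≤ |t * X ω| := le_abs_self _
    _ = |t| * ‖X ω‖ := abs_mul _ _
    _ ≤ |t| * M := by gcongr

theorem mgf_eq_of_integral_pow_eq {X : Ω → ℝ} {Y : Ω' → ℝ}
    (hX : integrableExpSet X μ = univ) (hY : integrableExpSet Y μ' = univ)
    (h : ∀ n : ℕ, μ[X ^ n] = μ'[Y ^ n]) : mgf X μ = mgf Y μ' := by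
  have hXs := hasFPowerSeriesAt_mgf (X := X) (μ := μ) (v := 0) (by simp [hX])
  have hYs := hasFPowerSeriesAt_mgf (X := Y) (μ := μ') (v := 0) (by simp [hY])
  simp only [zero_mul, Real.exp_zero, mul_one] at hXs hYs
  simp only [Pi.pow_apply] at h
  simp_rw [h] at hXs
  refine AnalyticOnNhd.eq_of_eventuallyEq (z₀ := 0) (fun t _ => analyticAt_mgf (by simp [hX]))
    (fun t _ => analyticAt_mgf (by simp [hY])) ?_
  filter_upwards [hXs.eventually_hasSum_sub, hYs.eventually_hasSum_sub] with t hXt hYt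
  exact hXt.unique hYt

theorem identDistrib_of_integral_pow_eq [IsProbabilityMeasure μ] [IsProbabilityMeasure μ']
    {X : Ω → ℝ} {Y : Ω' → ℝ} (hXm : AEMeasurable X μ) (hYm : AEMeasurable Y μ')
    (hX : integrableExpSet X μ = univ) (hY : integrableExpSet Y μ' = univ)
    (h : ∀ n : ℕ, μ[X ^ n] = μ'[Y ^ n]) : IdentDistrib X Y μ μ' :=
  ⟨hXm, hYm, Measure.ext_of_complexMGF_eq hXm hYm <| funext fun _ =>
    eqOn_complexMGF_of_mgf (mgf_eq_of_integral_pow_eq hX hY h) (by simp [hX])⟩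

theorem measurable_integral_of_measurable_uncurry [SFinite ν] {Y : T → Ω → ℝ}
    (hY : Measurable (Function.uncurry Y)) : Measurable fun ω => ∫ s, Y s ω ∂ν :=
  hY.stronglyMeasurable.integral_prod_left.measurable

theorem integral_integral_pow_eq_integral_pi [IsFiniteMeasure μ] [IsFiniteMeasure ν]
    {Y : T → Ω → ℝ} (hY : Measurable (Function.uncurry Y)) {M : ℝ}
    (hYM : ∀ s ω, ‖Y s ω‖ ≤ M) (k : ℕ) :
    ∫ ω, (∫ s, Y s ω ∂ν) ^ k ∂μ
      = ∫ t, ∫ ω, ∏ i, Y (t i) ω ∂μ ∂(Measure.pi fun _ : Fin k => ν) := by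
  have hprod : Measurable fun q : Ω × (Fin k → T) => ∏ i, Y (q.2 i) q.1 :=
    Finset.measurable_prod _ fun i _ =>
      hY.comp (f := fun q : Ω × (Fin k → T) => (q.2 i, q.1)) (by fun_prop)
  have hint : Integrable (Function.uncurry fun ω (t : Fin k → T) => ∏ i, Y (t i) ω)
      (μ.prod (Measure.pi fun _ : Fin k => ν)) := by
    refine Integrable.of_bound hprod.aestronglyMeasurable (M ^ k) <|
      Eventually.of_forall fun q => ?_
    simp only [Function.uncurry, norm_prod]
    calc ∏ i, ‖Y (q.2 i) q.1‖ ≤ ∏ _i : Fin k, M :=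
          Finset.prod_le_prod (fun i _ => norm_nonneg _) fun i _ => hYM _ _
      _ = M ^ k := by simp
  rw [← integral_integral_swap hint]
  refine integral_congr_ae (Eventually.of_forall fun ω => ?_)
  simpa using (integral_fintype_prod_eq_pow (ι := Fin k) (fun s => Y s ω) (μ := ν)).symm

theorem integral_integral_pow_eq_of_identDistrib [IsProbabilityMeasure μ]
    [IsProbabilityMeasure μ']
    [IsFiniteMeasure ν] {Y : T → Ω → ℝ} {Z : T → Ω' → ℝ}
    (hY : Measurable (Function.uncurry Y)) (hZ : Measurable (Function.uncurry Z)) {M : ℝ}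
    (hYM : ∀ s ω, ‖Y s ω‖ ≤ M) (hZM : ∀ s ω, ‖Z s ω‖ ≤ M) (k : ℕ)
    (hfdd : ∀ᵐ t ∂(Measure.pi fun _ : Fin k => ν),
      IdentDistrib (fun ω i => Y (t i) ω) (fun ω i => Z (t i) ω) μ μ') :
    ∫ ω, (∫ s, Y s ω ∂ν) ^ k ∂μ = ∫ ω, (∫ s, Z s ω ∂ν) ^ k ∂μ' := by
  rw [integral_integral_pow_eq_integral_pi hY hYM, integral_integral_pow_eq_integral_pi hZ hZM]
  refine integral_congr_ae ?_
  filter_upwards [hfdd] with t ht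
  have hprod : StronglyMeasurable fun v : Fin k → ℝ => ∏ i, v i :=
    (continuous_finsetProd _ fun i _ => continuous_apply i).stronglyMeasurable
  calc ∫ ω, ∏ i, Y (t i) ω ∂μ = ∫ v, ∏ i, v i ∂(μ.map fun ω i => Y (t i) ω) :=
        (integral_map ht.aemeasurable_fst hprod.aestronglyMeasurable).symm
    _ = ∫ ω, ∏ i, Z (t i) ω ∂μ' := by
        rw [ht.map_eq, integral_map ht.aemeasurable_snd hprod.aestronglyMeasurable]

theorem identDistrib_integral_of_fdd_of_bounded [IsProbabilityMeasure μ]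
    [IsProbabilityMeasure μ'] [IsFiniteMeasure ν] {Y : T → Ω → ℝ} {Z : T → Ω' → ℝ}
    (hY : Measurable (Function.uncurry Y)) (hZ : Measurable (Function.uncurry Z)) {M : ℝ}
    (hYM : ∀ s ω, ‖Y s ω‖ ≤ M) (hZM : ∀ s ω, ‖Z s ω‖ ≤ M)
    (hfdd : ∀ k : ℕ, ∀ᵐ t ∂(Measure.pi fun _ : Fin k => ν),
      IdentDistrib (fun ω i => Y (t i) ω) (fun ω i => Z (t i) ω) μ μ') :
    IdentDistrib (fun ω => ∫ s, Y s ω ∂ν) (fun ω => ∫ s, Z s ω ∂ν) μ μ' := by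
  have hYm := (measurable_integral_of_measurable_uncurry (ν := ν) hY).aemeasurable (μ := μ)
  have hZm := (measurable_integral_of_measurable_uncurry (ν := ν) hZ).aemeasurable (μ := μ')
  refine identDistrib_of_integral_pow_eq hYm hZm
    (integrableExpSet_eq_univ_of_norm_le hYm <| Eventually.of_forall fun ω =>
      norm_integral_le_of_norm_le_const (Eventually.of_forall fun s => hYM s ω))
    (integrableExpSet_eq_univ_of_norm_le hZm <| Eventually.of_forall fun ω =>
      norm_integral_le_of_norm_le_const (Eventually.of_forall fun s => hZM s ω))
    fun k => integral_integral_pow_eq_of_identDistrib hY hZ hYM hZM k (hfdd k)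

theorem identDistrib_of_ae_tendsto {E : Type*} [TopologicalSpace E] [MeasurableSpace E]
    [BorelSpace E] [HasOuterApproxClosed E] [IsProbabilityMeasure μ] [IsProbabilityMeasure μ']
    {Y : ℕ → Ω → E} {Z : ℕ → Ω' → E} {Y₀ : Ω → E} {Z₀ : Ω' → E}
    (h : ∀ n, IdentDistrib (Y n) (Z n) μ μ') (hY₀ : AEMeasurable Y₀ μ)
    (hZ₀ : AEMeasurable Z₀ μ') (hY : ∀ᵐ ω ∂μ, Tendsto (Y · ω) atTop (𝓝 (Y₀ ω)))
    (hZ : ∀ᵐ ω ∂μ', Tendsto (Z · ω) atTop (𝓝 (Z₀ ω))) :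
    IdentDistrib Y₀ Z₀ μ μ' := by
  have hYlim := tendstoInDistribution_of_ae_tendsto (fun n => (h n).aemeasurable_fst) hY₀ hY
  have hZlim := tendstoInDistribution_of_ae_tendsto (fun n => (h n).aemeasurable_snd) hZ₀ hZ
  have hYZlim : TendstoInDistribution Y atTop Z₀ (fun _ => μ) μ' :=
    { forall_aemeasurable := fun n => (h n).aemeasurable_fst
      aemeasurable_limit := hZ₀
      tendsto := (tendsto_congr fun n => Subtype.ext (h n).map_eq.symm).1 hZlim.tendsto }
  exact ⟨hY₀, hZ₀, tendstoInDistribution_unique Y hYlim hYZlim⟩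

theorem identDistrib_integral_of_fdd [IsProbabilityMeasure μ] [IsProbabilityMeasure μ']
    [IsFiniteMeasure ν] {Y : T → Ω → ℝ} {Z : T → Ω' → ℝ}
    (hY : Measurable (Function.uncurry Y)) (hZ : Measurable (Function.uncurry Z))
    (hYi : ∀ᵐ ω ∂μ, Integrable (Y · ω) ν) (hZi : ∀ᵐ ω ∂μ', Integrable (Z · ω) ν)
    (hfdd : ∀ k : ℕ, ∀ᵐ t ∂(Measure.pi fun _ : Fin k => ν),
      IdentDistrib (fun ω i => Y (t i) ω) (fun ω i => Z (t i) ω) μ μ') :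
    IdentDistrib (fun ω => ∫ s, Y s ω ∂ν) (fun ω => ∫ s, Z s ω ∂ν) μ μ' := by
  refine identDistrib_of_ae_tendsto (Y := fun (m : ℕ) ω => ∫ s, truncation (Y · ω) m s ∂ν)
    (Z := fun (m : ℕ) ω => ∫ s, truncation (Z · ω) m s ∂ν) (fun m => ?_)
    (measurable_integral_of_measurable_uncurry hY).aemeasurable
    (measurable_integral_of_measurable_uncurry hZ).aemeasurable
    (hYi.mono fun ω hω => (tendsto_integral_truncation hω).comp tendsto_natCast_atTop_atTop)
    (hZi.mono fun ω hω => (tendsto_integral_truncation hω).comp tendsto_natCast_atTop_atTop)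
  have hind : Measurable ((Ioc (-(m : ℝ)) m).indicator id) :=
    measurable_id.indicator measurableSet_Ioc
  refine identDistrib_integral_of_fdd_of_bounded (hind.comp hY) (hind.comp hZ)
    (M := |(m : ℝ)|) (fun s ω => abs_truncation_le_bound _ _ _)
    (fun s ω => abs_truncation_le_bound _ _ _) fun k => ?_
  filter_upwards [hfdd k] with t ht
  exact ht.comp (measurable_pi_lambda _ fun i => hind.comp (measurable_pi_apply i))

theorem setIntegral_Ioc_zero_eq_mul_setIntegral_comp_mul (f : ℝ → ℝ) {c : ℝ} (hc : 0 < c) :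
    ∫ t in Ioc 0 c, f t = c * ∫ s in Ioc 0 1, f (c * s) := by
  rw [← intervalIntegral.integral_of_le hc.le, ← intervalIntegral.integral_of_le zero_le_one,
    intervalIntegral.integral_comp_mul_left f hc.ne', mul_zero, mul_one, smul_eq_mul,
    mul_inv_cancel_left₀ hc.ne']

theorem MeasureTheory.IntegrableOn.comp_mul_Ioc_zero_one {f : ℝ → ℝ} {c : ℝ} (hc : 0 < c)
    (hf : IntegrableOn f (Ioc 0 c)) : IntegrableOn (fun s => f (c * s)) (Ioc 0 1) := by
  rw [← intervalIntegrable_iff_integrableOn_Ioc_of_le zero_le_one]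
  simpa [hc.ne'] using
    ((intervalIntegrable_iff_integrableOn_Ioc_of_le hc.le).2 hf).comp_mul_left (c := c)

theorem monotone_setIntegral_Ioc_zero {f : ℝ → ℝ} (hf0 : ∀ t, 0 ≤ f t)
    (hf : ∀ T > (0:ℝ), IntegrableOn f (Ioc 0 T)) : Monotone fun T => ∫ t in Ioc 0 T, f t := by
  intro a b hab
  have hfb : IntegrableOn f (Ioc 0 b) := by
    rcases le_or_gt b 0 with hb | hb
    · simp [Ioc_eq_empty_of_le hb]
    · exact hf b hb
  exact setIntegral_mono_set hfb (Eventually.of_forall hf0)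
    (Ioc_subset_Ioc_right hab).eventuallyLE

theorem liminf_rpow_neg_mul_pos_of_monotone {F : ℝ → ℝ} (hF : Monotone F) {a b : ℝ}
    (ha : 0 ≤ a) (hb : 1 < b) (h : ∀ᶠ n : ℕ in atTop, (b ^ n) ^ a < F (b ^ n)) :
    0 < liminf (fun T => ((T ^ (-a) * F T : ℝ) : EReal)) atTop := by
  obtain ⟨N, hN⟩ := eventually_atTop.1 h
  refine (EReal.coe_pos.2 (Real.rpow_pos_of_pos (zero_lt_one.trans hb) (-a))).trans_le
    (le_liminf_of_le (by isBoundedDefault) ?_)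
  filter_upwards [eventually_ge_atTop (b ^ N)] with T hT
  have hb0 : 0 < b := zero_lt_one.trans hb
  have hT0 : 0 < T := (pow_pos hb0 N).trans_le hT
  obtain ⟨n, hnT, hTn⟩ := exists_nat_pow_near ((one_le_pow₀ hb.le).trans hT) hb
  have hNn : N ≤ n := Nat.lt_succ_iff.1 ((pow_lt_pow_iff_right₀ hb).1 (hT.trans_lt hTn))
  refine EReal.coe_le_coe_iff.2 ?_
  calc b ^ (-a) = T ^ (-a) * (T / b) ^ a := by
        rw [Real.div_rpow hT0.le hb0.le, Real.rpow_neg hT0.le, Real.rpow_neg hb0.le]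
        field_simp [(Real.rpow_pos_of_pos hT0 a).ne']
    _ ≤ T ^ (-a) * (b ^ n) ^ a := by
        gcongr
        rw [div_le_iff₀ hb0, ← pow_succ]
        exact hTn.le
    _ ≤ T ^ (-a) * F T := by
        gcongr
        exact (hN n hNn).le.trans (hF hnT)

def IsSelfSimilar (P : Measure Ω) (X : ℝ → Ω → ℝ) (H : ℝ) : Prop :=
  ∀ c > (0:ℝ), ∀ n : ℕ, ∀ t : Fin n → ℝ, (∀ i, 0 ≤ t i) →
    Measure.map (fun ω => fun i => X (c * t i) ω) P
      = Measure.map (fun ω => fun i => c ^ H * X (t i) ω) P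

theorem IsSelfSimilar.identDistrib_integral_rpow [IsProbabilityMeasure μ] {X : ℝ → Ω → ℝ}
    {H : ℝ} (hss : IsSelfSimilar μ X H) (hX : Measurable (Function.uncurry X)) (p : ℝ)
    (hint : ∀ᵐ ω ∂μ, ∀ T > (0:ℝ), IntegrableOn (fun t => |X t ω| ^ p) (Ioc 0 T))
    {c : ℝ} (hc : 0 < c) :
    IdentDistrib (fun ω => ∫ s in Ioc 0 1, |X (c * s) ω| ^ p)
      (fun ω => c ^ (p * H) * ∫ s in Ioc 0 1, |X s ω| ^ p) μ μ := by
  have hscale : ∀ x : ℝ, |c ^ H * x| ^ p = c ^ (p * H) * |x| ^ p := fun x => by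
    rw [abs_mul, abs_of_pos (Real.rpow_pos_of_pos hc H),
      Real.mul_rpow (by positivity) (abs_nonneg x), ← Real.rpow_mul hc.le, mul_comm H]
  have key := identDistrib_integral_of_fdd (ν := volume.restrict (Ioc (0:ℝ) 1))
    (Y := fun s ω => |X (c * s) ω| ^ p) (Z := fun s ω => |c ^ H * X s ω| ^ p) (by fun_prop)
    (by fun_prop)
    (hint.mono fun ω hω => (hω c hc).comp_mul_Ioc_zero_one hc)
    (hint.mono fun ω hω => by simpa only [hscale] using (hω 1 one_pos).const_mul (c ^ (p * H)))
    fun k => ?_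
  · simpa only [hscale, integral_const_mul] using key
  have hmem : ∀ᵐ t ∂(Measure.pi fun _ : Fin k => volume.restrict (Ioc (0:ℝ) 1)),
      ∀ i, t i ∈ Ioc (0:ℝ) 1 :=
    eventually_all.2 fun i =>
      Measure.tendsto_eval_ae_ae.eventually (ae_restrict_mem measurableSet_Ioc)
  filter_upwards [hmem] with t ht
  have hfdd : IdentDistrib (fun ω i => X (c * t i) ω) (fun ω i => c ^ H * X (t i) ω) μ μ :=
    ⟨by fun_prop, by fun_prop, hss c hc k t fun i => (ht i).1.le⟩
  exact hfdd.comp (measurable_pi_lambda _ fun i => (measurable_pi_apply i).abs.pow_const p)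

theorem IsSelfSimilar.measure_integral_rpow_le_rpow [IsProbabilityMeasure μ] {X : ℝ → Ω → ℝ}
    {H : ℝ} (hss : IsSelfSimilar μ X H) (hX : Measurable (Function.uncurry X)) {p : ℝ}
    (hp : 0 < p)
    (hint : ∀ᵐ ω ∂μ, ∀ T > (0:ℝ), IntegrableOn (fun t => |X t ω| ^ p) (Ioc 0 T))
    {C : ℝ} {ξ : Ω → ℝ} (hξ : ∀ y : ℝ, 0 ≤ y → μ {ω | ξ ω ≤ y} ≤ ENNReal.ofReal (C * y))
    (hdom : ∀ᵐ ω ∂μ, ξ ω ^ p ≤ ∫ t in Ioc (0:ℝ) 1, |X t ω| ^ p) {c : ℝ} (hc : 0 < c)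
    (ε : ℝ) :
    μ {ω | ∫ t in Ioc 0 c, |X t ω| ^ p ≤ c ^ (1 + ε)}
      ≤ ENNReal.ofReal (C * c ^ ((ε - p * H) / p)) := by
  set y := c ^ ((ε - p * H) / p)
  have hy : 0 ≤ y := Real.rpow_nonneg hc.le _
  have hcH : 0 < c ^ (p * H) := Real.rpow_pos_of_pos hc _
  have hcε : c ^ (1 + ε) = c * (c ^ (p * H) * y ^ p) := by
    rw [← Real.rpow_mul hc.le, div_mul_cancel₀ _ hp.ne', ← Real.rpow_add hc, add_sub_cancel,
      Real.rpow_add hc, Real.rpow_one]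
  have hset : {ω | ∫ t in Ioc 0 c, |X t ω| ^ p ≤ c ^ (1 + ε)}
      = (fun ω => ∫ s in Ioc 0 1, |X (c * s) ω| ^ p) ⁻¹' Iic (c ^ (p * H) * y ^ p) := by
    ext ω
    simp only [mem_ofPred_eq, mem_preimage, mem_Iic, hcε,
      setIntegral_Ioc_zero_eq_mul_setIntegral_comp_mul _ hc, mul_le_mul_iff_right₀ hc]
  rw [hset, (hss.identDistrib_integral_rpow hX p hint hc).measure_mem_eq measurableSet_Iic]
  refine (measure_mono_ae (hdom.mono fun ω hω hmem => ?_)).trans (hξ y hy)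
  have hle : ξ ω ^ p ≤ y ^ p := hω.trans ((mul_le_mul_iff_right₀ hcH).1 hmem)
  by_contra hlt
  exact (Real.rpow_lt_rpow hy (not_le.1 hlt) hp).not_ge hle

end

theorem stmt_5_general
    {Ω : Type*} [MeasurableSpace Ω] (P : Measure Ω) [IsProbabilityMeasure P]
    (X : ℝ → Ω → ℝ) (p H : ℝ) (hp : 1 < p)
    (hXmeas : Measurable (Function.uncurry X))
    (hint : ∀ᵐ ω ∂P, ∀ T > (0:ℝ), IntegrableOn (fun t => |X t ω| ^ p) (Ioc 0 T))
    -- (i): self-similarity with index H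
    (hss : ∀ c > (0:ℝ), ∀ n : ℕ, ∀ t : Fin n → ℝ, (∀ i, 0 ≤ t i) →
      Measure.map (fun ω => fun i => X (c * t i) ω) P
        = Measure.map (fun ω => fun i => c ^ H * X (t i) ω) P)
    -- (ii): lower bound by a random variable with a linearly bounded distribution function
    (C : ℝ) (ξ : Ω → ℝ)
    (hξ : ∀ y : ℝ, 0 ≤ y → P {ω | ξ ω ≤ y} ≤ ENNReal.ofReal (C * y))
    (hdom : ∀ᵐ ω ∂P, ξ ω ^ p ≤ ∫ t in Ioc (0:ℝ) 1, |X t ω| ^ p) :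
    ∀ ε ∈ Ioo (0:ℝ) (p * H), ∀ᵐ ω ∂P,
      0 < Filter.liminf (fun T : ℝ =>
        ((T ^ (-1 - ε) * ∫ t in Ioc (0:ℝ) T, |X t ω| ^ p : ℝ) : EReal)) atTop := by
  intro ε hε
  have hp0 : 0 < p := zero_lt_one.trans hp
  have hq : (ε - p * H) / p < 0 := div_neg_of_neg_of_pos (by linarith [hε.2]) hp0
  have htail : ∀ n : ℕ,
      P {ω | ∫ t in Ioc 0 ((2:ℝ) ^ n), |X t ω| ^ p ≤ ((2:ℝ) ^ n) ^ (1 + ε)}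
        ≤ ENNReal.ofReal C * ENNReal.ofReal (2 ^ ((ε - p * H) / p)) ^ n := fun n =>
    (IsSelfSimilar.measure_integral_rpow_le_rpow hss hXmeas hp0 hint hξ hdom
      (pow_pos two_pos n) ε).trans_eq <| by
      rw [← Real.rpow_pow_comm zero_le_two, ENNReal.ofReal_mul' (by positivity),
        ENNReal.ofReal_pow (by positivity)]
  have hsum := (ENNReal.tsum_le_tsum htail).trans_lt <| by
    rw [ENNReal.tsum_mul_left]
    exact ENNReal.mul_lt_top ENNReal.ofReal_lt_top <| tsum_geometric_lt_top.2 <|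
      ENNReal.ofReal_lt_one.2 (Real.rpow_lt_one_of_one_lt_of_neg one_lt_two hq)
  filter_upwards [hint, ae_eventually_notMem hsum.ne] with ω hω hev
  have := liminf_rpow_neg_mul_pos_of_monotone
    (monotone_setIntegral_Ioc_zero (fun t => by positivity) hω) (a := 1 + ε)
    (by linarith [hε.1]) one_lt_two (hev.mono fun n hn => not_le.1 hn)
  rwa [neg_add'] at this

/-- if `X` is `H`-self-similar and `∫₀^1 |X_t|^p dt ≥ ξ^p` a.s. for a
nonnegative random variable `ξ` with `P[ξ ≤ y] ≤ C y`, then for every `ε ∈ (0, pH)`,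
almost surely `liminf_{T→∞} T^{-1-ε} ∫₀^T |X_t|^p dt > 0` (liminf taken in the
extended reals). -/
theorem stmt_5
    {Ω : Type*} [MeasurableSpace Ω] (P : Measure Ω) [IsProbabilityMeasure P]
    (X : ℝ → Ω → ℝ) (p H : ℝ) (hp : 1 < p) (hH : H ∈ Ioo (0:ℝ) 1)
    (hXmeas : Measurable (Function.uncurry X))
    (hint : ∀ᵐ ω ∂P, ∀ T > (0:ℝ), IntegrableOn (fun t => |X t ω| ^ p) (Ioc 0 T))
    -- (i): self-similarity with index H
    (hss : ∀ c > (0:ℝ), ∀ n : ℕ, ∀ t : Fin n → ℝ, (∀ i, 0 ≤ t i) →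
      Measure.map (fun ω => fun i => X (c * t i) ω) P
        = Measure.map (fun ω => fun i => c ^ H * X (t i) ω) P)
    -- (ii): lower bound by a random variable with a linearly bounded distribution function
    (C : ℝ) (hC : 0 < C) (ξ : Ω → ℝ) (hξnn : ∀ ω, 0 ≤ ξ ω)
    (hξ : ∀ y : ℝ, 0 ≤ y → P {ω | ξ ω ≤ y} ≤ ENNReal.ofReal (C * y))
    (hdom : ∀ᵐ ω ∂P, ξ ω ^ p ≤ ∫ t in Ioc (0:ℝ) 1, |X t ω| ^ p) :
    ∀ ε ∈ Ioo (0:ℝ) (p * H), ∀ᵐ ω ∂P,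
      0 < Filter.liminf (fun T : ℝ =>
        ((T ^ (-1 - ε) * ∫ t in Ioc (0:ℝ) T, |X t ω| ^ p : ℝ) : EReal)) atTop :=
  stmt_5_general P X p H hp hXmeas hint hss C ξ hξ hdom
end

section
/- Let ξ₁, …, ξ_n be real-valued square-integrable random variables on a probability space (Ω, F, P) such that E[ξ_i ξ_j] ≥ 0 for all 1 ≤ i, j ≤ n. Then Σ_{i=1}^n Σ_{j=1}^n (E[ξ_i ξ_j])² ≤ (max_{1≤i≤n} E[ξ_i²]) · E[(Σ_{i=1}^n ξ_i)²]. -/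
/-!
By Cauchy–Schwarz in `L²`, every correlation `E[ξᵢξⱼ]` is at most `M = maxₖ E[ξₖ²]`; being
nonnegative, its square is then at most `M · E[ξᵢξⱼ]`, and summing over `i, j` gives
`M · E[(∑ ξᵢ)²]`.
-/

open MeasureTheory Finset
open scoped InnerProductSpace

theorem real_inner_le_of_norm_sq_le {E : Type*} [NormedAddCommGroup E] [InnerProductSpace ℝ E]
    {x y : E} {M : ℝ} (hx : ‖x‖ ^ 2 ≤ M) (hy : ‖y‖ ^ 2 ≤ M) : ⟪x, y⟫_ℝ ≤ M := by
  nlinarith [real_inner_le_norm x y, sq_nonneg (‖x‖ - ‖y‖)]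

theorem sum_sum_real_inner_sq_le_mul_norm_sum_sq {E ι : Type*} [NormedAddCommGroup E]
    [InnerProductSpace ℝ E] [Fintype ι] (v : ι → E) {M : ℝ}
    (hM : ∀ i, ‖v i‖ ^ 2 ≤ M) (hpos : ∀ i j, 0 ≤ ⟪v i, v j⟫_ℝ) :
    ∑ i, ∑ j, ⟪v i, v j⟫_ℝ ^ 2 ≤ M * ‖∑ i, v i‖ ^ 2 := by
  calc ∑ i, ∑ j, ⟪v i, v j⟫_ℝ ^ 2 ≤ ∑ i, ∑ j, M * ⟪v i, v j⟫_ℝ := by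
        gcongr with i _ j _
        rw [sq]
        exact mul_le_mul_of_nonneg_right (real_inner_le_of_norm_sq_le (hM i) (hM j)) (hpos i j)
    _ = M * ‖∑ i, v i‖ ^ 2 := by
        simp_rw [← real_inner_self_eq_norm_sq, sum_inner, inner_sum, mul_sum]

namespace MeasureTheory.MemLp

variable {α : Type*} [MeasurableSpace α] {μ : Measure α}

theorem toLp_finsetSum {E ι : Type*} [NormedAddCommGroup E] {p : ENNReal} [Fact (1 ≤ p)]
    (s : Finset ι) {f : ι → α → E} (hf : ∀ i, MemLp (f i) p μ) :
    (memLp_finsetSum s fun i _ => hf i).toLp (fun a => ∑ i ∈ s, f i a)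
      = ∑ i ∈ s, (hf i).toLp (f i) := by
  classical
  induction s using Finset.induction_on with
  | empty => rfl
  | insert i s hi ih =>
    rw [sum_insert hi, ← ih, ← toLp_add, toLp_eq_toLp_iff]
    exact Filter.Eventually.of_forall fun a => by simp [sum_insert hi]

theorem inner_toLp_toLp {f g : α → ℝ} (hf : MemLp f 2 μ) (hg : MemLp g 2 μ) :
    ⟪hf.toLp f, hg.toLp g⟫_ℝ = ∫ a, f a * g a ∂μ := by
  rw [L2.inner_def]
  refine integral_congr_ae ?_
  filter_upwards [hf.coeFn_toLp, hg.coeFn_toLp] with a hfa hga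
  simp [hfa, hga, mul_comm]

theorem norm_toLp_sq {f : α → ℝ} (hf : MemLp f 2 μ) : ‖hf.toLp f‖ ^ 2 = ∫ a, f a ^ 2 ∂μ := by
  simp_rw [← real_inner_self_eq_norm_sq, inner_toLp_toLp, sq]

end MeasureTheory.MemLp

/-- for square-integrable random variables `ξ₁, …, ξ_n` with pairwise
nonnegative correlations `E[ξ_i ξ_j] ≥ 0`, the sum of squared covariances is bounded by
the maximal second moment times the second moment of the sum. -/
theorem stmt_9
    {Ω : Type*} [MeasurableSpace Ω] (P : Measure Ω)
    (n : ℕ) (hn : 0 < n) (ξ : Fin n → Ω → ℝ)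
    (hL2 : ∀ i, MemLp (ξ i) 2 P)
    (hpos : ∀ i j, 0 ≤ ∫ ω, ξ i ω * ξ j ω ∂P) :
    ∑ i, ∑ j, (∫ ω, ξ i ω * ξ j ω ∂P) ^ 2
      ≤ (Finset.univ.sup'
            (by have : Nonempty (Fin n) := Fin.pos_iff_nonempty.mp hn
                exact Finset.univ_nonempty)
            fun i => ∫ ω, (ξ i ω) ^ 2 ∂P)
        * ∫ ω, (∑ i, ξ i ω) ^ 2 ∂P := by
  set f : Fin n → Lp ℝ 2 P := fun i => (hL2 i).toLp (ξ i)
  have hgram (i j) : ⟪f i, f j⟫_ℝ = ∫ ω, ξ i ω * ξ j ω ∂P := MemLp.inner_toLp_toLp _ _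
  have hsum : ‖∑ i, f i‖ ^ 2 = ∫ ω, (∑ i, ξ i ω) ^ 2 ∂P := by
    rw [← MemLp.toLp_finsetSum, MemLp.norm_toLp_sq]
  simp_rw [← hgram, ← hsum] at hpos ⊢
  refine sum_sum_real_inner_sq_le_mul_norm_sum_sq f (fun i => ?_) hpos
  exact (MemLp.norm_toLp_sq _).trans_le (le_sup' (fun i => ∫ ω, ξ i ω ^ 2 ∂P) (mem_univ i))
end

section
/- Let (Ω, F, P) be a probability space, let ξ be a real random variable, and suppose there exist constants λ₀ > 0, K₃ ≥ 1 and K₄ > 0 such that P[|ξ| ≤ x] ≤ K₃ exp(−K₄ x^{−λ₀}) for every x > 0. Let φ : ℝ → ℝ be the 2-periodic continuous function determined by φ(t) = t for t ∈ [0,1] and φ(t) = 2 − t for t ∈ [1,2], and define X_t(ω) = ξ(ω)·φ(t). Then for every s ≥ 0, every Δ ∈ (0,2] and every η > 0, P[ sup_{t ∈ [s, s+Δ]} |X_t − X_s| ≤ η ] ≤ K₃ exp( −K₄ (4η/Δ)^{−λ₀} ). -/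
open Set MeasureTheory

lemma hat_osc_base (φ : ℝ → ℝ)
    (hper : ∀ t : ℝ, φ (t + 2) = φ t)
    (h1 : ∀ t ∈ Icc (0:ℝ) 1, φ t = t)
    (h2 : ∀ t ∈ Icc (1:ℝ) 2, φ t = 2 - t)
    (s Δ : ℝ) (hs0 : 0 ≤ s) (hs2 : s < 2) (hΔ : 0 < Δ) (hΔ2 : Δ ≤ 2) :
    ∃ t ∈ Icc s (s + Δ), Δ / 4 ≤ |φ t - φ s| := by
  rcases le_or_gt s 1 with hs1 | hs1
  · rcases le_or_gt (s + Δ/4) 1 with h | h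
    · refine ⟨s + Δ/4, ⟨by linarith, by linarith⟩, ?_⟩
      rw [h1 _ ⟨by linarith, h⟩, h1 _ ⟨hs0, hs1⟩,
        abs_of_nonneg (by linarith)]
      linarith
    · refine ⟨2 - s + Δ/4, ⟨by linarith, by linarith⟩, ?_⟩
      rw [h2 _ ⟨by linarith, by linarith⟩, h1 _ ⟨hs0, hs1⟩,
        show 2 - (2 - s + Δ/4) - s = -(Δ/4) by ring, abs_neg,
        abs_of_nonneg (by linarith)]
  · rcases le_or_gt (s + Δ/4) 2 with h | h
    · refine ⟨s + Δ/4, ⟨by linarith, by linarith⟩, ?_⟩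
      rw [h2 _ ⟨by linarith, h⟩, h2 _ ⟨hs1.le, hs2.le⟩,
        show 2 - (s + Δ/4) - (2 - s) = -(Δ/4) by ring, abs_neg,
        abs_of_nonneg (by linarith)]
    · refine ⟨4 - s + Δ/4, ⟨by linarith, by linarith⟩, ?_⟩
      have hφt : φ (4 - s + Δ/4) = 2 - s + Δ/4 := by
        rw [show (4 - s + Δ/4 : ℝ) = (2 - s + Δ/4) + 2 by ring, hper,
          h1 _ ⟨by linarith, by linarith⟩]
      rw [hφt, h2 _ ⟨hs1.le, hs2.le⟩, abs_of_nonneg (by linarith)]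
      linarith

lemma hat_osc (φ : ℝ → ℝ)
    (hper : ∀ t : ℝ, φ (t + 2) = φ t)
    (h1 : ∀ t ∈ Icc (0:ℝ) 1, φ t = t)
    (h2 : ∀ t ∈ Icc (1:ℝ) 2, φ t = 2 - t)
    (s Δ : ℝ) (hΔ : 0 < Δ) (hΔ2 : Δ ≤ 2) :
    ∃ t ∈ Icc s (s + Δ), Δ / 4 ≤ |φ t - φ s| := by
  have hP : Function.Periodic φ 2 := hper
  set n : ℤ := ⌊s / 2⌋ with hn
  have hfr0 : (0:ℝ) ≤ s / 2 - n := by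
    have := Int.floor_le (s / 2); linarith
  have hfr1 : s / 2 - n < 1 := by
    have := Int.lt_floor_add_one (s / 2); linarith
  set s' : ℝ := s - n * 2 with hs'
  have hs'0 : 0 ≤ s' := by simp only [hs']; linarith
  have hs'2 : s' < 2 := by simp only [hs']; linarith
  obtain ⟨t, ⟨ht1, ht2⟩, hosc⟩ :=
    hat_osc_base φ hper h1 h2 s' Δ hs'0 hs'2 hΔ hΔ2
  refine ⟨t + n * 2, ⟨by simp only [hs'] at ht1; linarith,
    by simp only [hs'] at ht2; linarith⟩, ?_⟩
  have e1 : φ (t + n * 2) = φ t := by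
    have := hP.sub_int_mul_eq (x := t + n * 2) (n := n)
    simpa using this.symm
  have e2 : φ s = φ s' := by
    have := hP.sub_int_mul_eq (x := s) (n := n)
    simpa [hs'] using this.symm
  rw [e1, e2]; exact hosc

/-- small ball estimate for the process `X_t = ξ · φ(t)`, where `φ` is the
2-periodic hat function and `P[|ξ| ≤ x] ≤ K₃ exp(-K₄ x^{-λ₀})` for all `x > 0`:
for `s ≥ 0`, `Δ ∈ (0,2]` and `η > 0`,
`P[sup_{t ∈ [s,s+Δ]} |X_t - X_s| ≤ η] ≤ K₃ exp(-K₄ (4η/Δ)^{-λ₀})`. -/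
theorem stmt_11
    {Ω : Type*} [MeasurableSpace Ω] (P : Measure Ω) [IsProbabilityMeasure P]
    (ξ : Ω → ℝ) (lam₀ K₃ K₄ : ℝ) (hlam : 0 < lam₀) (hK₃ : 1 ≤ K₃) (hK₄ : 0 < K₄)
    (htail : ∀ x > (0:ℝ), P {ω | |ξ ω| ≤ x}
      ≤ ENNReal.ofReal (K₃ * Real.exp (-K₄ * x ^ (-lam₀))))
    (φ : ℝ → ℝ)
    (hper : ∀ t : ℝ, φ (t + 2) = φ t)
    (h1 : ∀ t ∈ Icc (0:ℝ) 1, φ t = t)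
    (h2 : ∀ t ∈ Icc (1:ℝ) 2, φ t = 2 - t)
    (X : ℝ → Ω → ℝ) (hX : ∀ t ω, X t ω = ξ ω * φ t) :
    ∀ s : ℝ, 0 ≤ s → ∀ Δ ∈ Ioc (0:ℝ) 2, ∀ η > (0:ℝ),
      P {ω | ∀ t ∈ Icc s (s + Δ), |X t ω - X s ω| ≤ η}
        ≤ ENNReal.ofReal (K₃ * Real.exp (-K₄ * (4 * η / Δ) ^ (-lam₀))) := by
  intro s hs Δ hΔmem η hη
  obtain ⟨hΔ, hΔ2⟩ := hΔmem
  obtain ⟨t, htmem, hosc⟩ := hat_osc φ hper h1 h2 s Δ hΔ hΔ2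
  have hx : (0:ℝ) < 4 * η / Δ := by positivity
  refine le_trans (measure_mono ?_) (htail _ hx)
  intro ω hω
  have hη' := hω t htmem
  have heq : |X t ω - X s ω| = |ξ ω| * |φ t - φ s| := by
    rw [hX, hX, ← mul_sub, abs_mul]
  rw [heq] at hη'
  have h1' : |ξ ω| * (Δ / 4) ≤ η := by
    calc |ξ ω| * (Δ / 4) ≤ |ξ ω| * |φ t - φ s| := by
          exact mul_le_mul_of_nonneg_left hosc (abs_nonneg _)
      _ ≤ η := hη'
  show |ξ ω| ≤ 4 * η / Δ
  rw [le_div_iff₀ hΔ]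
  nlinarith [abs_nonneg (ξ ω)]
end

section
/- Let (Ω, F, P) be a probability space, g : [0,∞) × Ω → [0,∞) a jointly measurable process with g_t integrable for every t ≥ 0, and Z : Ω → [0,∞) a random variable. Let A = {Z = 0}. Assume: (a) almost surely, (1/T) ∫₀^T g_t dt → Z as T → ∞; (b) the family { (1/T) ∫₀^T g_t dt : T > 0 } is uniformly integrable; (c) for all s, t ≥ 0, E[g_s · 1_A] = E[g_t · 1_A]; (d) almost surely, sup_{T>0} ∫₀^T g_t dt > 0. Then P(A) = 0; that is, Z > 0 almost surely, and hence (1/T) ∫₀^T g_t dt converges almost surely to a strictly positive limit. -/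
/-!
Since `Z = 0` on `A`, the integrals of the time averages over `A` tend to `0`; the limit may be
taken under the integral thanks to uniform integrability (Vitali). By Fubini and stationarity,
however, each of these integrals equals the constant `E[g₀ 1_A]`, which therefore vanishes. Hence
`g_t = 0` a.s. on `A` for every `t ≥ 0`, so by Fubini again almost every path in `A` has
`∫₀^T g_t dt = 0` for all `T`, which contradicts (d) unless `P(A) = 0`.
-/

open Set Filter MeasureTheory Topology
open scoped ENNReal

namespace MeasureTheory

variable {α ι κ : Type*} [MeasurableSpace α] {μ : Measure α}

theorem UniformIntegrable.comp {β : Type*} [NormedAddCommGroup β] {p : ℝ≥0∞}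
    {f : ι → α → β} (hf : UniformIntegrable f p μ) (φ : κ → ι) :
    UniformIntegrable (fun k => f (φ k)) p μ :=
  ⟨fun k => hf.1 (φ k), fun _ hε => (hf.2.1 hε).imp fun _ ⟨hδ, h⟩ => ⟨hδ, fun k => h (φ k)⟩,
    hf.2.2.imp fun _ hC k => hC (φ k)⟩

theorem UniformIntegrable.tendsto_setIntegral_of_ae_tendsto {E : Type*} [NormedAddCommGroup E]
    [NormedSpace ℝ E] [CompleteSpace E] [IsFiniteMeasure μ] {f : ℕ → α → E} {g : α → E}
    (hf : UniformIntegrable f 1 μ) (hfg : ∀ᵐ x ∂μ, Tendsto (fun n => f n x) atTop (𝓝 (g x)))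
    (s : Set α) :
    Tendsto (fun n => ∫ x in s, f n x ∂μ) atTop (𝓝 (∫ x in s, g x ∂μ)) :=
  have hg : MemLp g 1 μ := hf.memLp_of_ae_tendsto hfg
  tendsto_setIntegral_of_L1' g hg.1
    (Eventually.of_forall fun n => memLp_one_iff_integrable.mp (hf.memLp n))
    (tendsto_Lp_finite_of_tendsto_ae le_rfl ENNReal.one_ne_top hf.1 hg hf.2.1 hfg) s

end MeasureTheory

section TimeAverage

variable {Ω : Type*} [MeasurableSpace Ω] {μ : Measure Ω} [SFinite μ] {g : ℝ → Ω → ℝ}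

theorem integral_timeAverage_eq_of_integral_eq_const {T c : ℝ} (hT : 0 < T)
    (hg : Measurable (Function.uncurry g)) (hnn : ∀ t ω, 0 ≤ g t ω)
    (hint : ∀ t ∈ Ioc (0:ℝ) T, Integrable (g t) μ)
    (hconst : ∀ t ∈ Ioc (0:ℝ) T, ∫ ω, g t ω ∂μ = c) :
    ∫ ω, T⁻¹ * (∫ t in Ioc (0:ℝ) T, g t ω) ∂μ = c := by
  have hconst_ae : (fun t => ∫ ω, g t ω ∂μ) =ᵐ[volume.restrict (Ioc (0:ℝ) T)] fun _ => c :=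
    ae_restrict_of_forall_mem measurableSet_Ioc hconst
  have hprod : Integrable (Function.uncurry g) ((volume.restrict (Ioc (0:ℝ) T)).prod μ) := by
    refine (integrable_prod_iff hg.aestronglyMeasurable).mpr
      ⟨ae_restrict_of_forall_mem measurableSet_Ioc hint, ?_⟩
    simp_rw [Function.uncurry_apply_pair, Real.norm_of_nonneg (hnn _ _)]
    exact (integrable_const c).congr hconst_ae.symm
  rw [integral_const_mul, ← integral_integral_swap hprod, integral_congr_ae hconst_ae,
    setIntegral_const, Real.volume_real_Ioc_of_le hT.le, sub_zero, smul_eq_mul,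
    inv_mul_cancel_left₀ hT.ne']

theorem ae_forall_setIntegral_Ioc_eq_zero (hg : Measurable (Function.uncurry g))
    (hnn : ∀ t ω, 0 ≤ g t ω) (hint : ∀ t, 0 < t → Integrable (g t) μ)
    (hzero : ∀ t, 0 < t → ∫ ω, g t ω ∂μ = 0) :
    ∀ᵐ ω ∂μ, ∀ T, ∫ t in Ioc (0:ℝ) T, g t ω = 0 := by
  have hslice : ∀ᵐ t ∂volume.restrict (Ioi 0), ∀ᵐ ω ∂μ, g t ω = 0 :=
    ae_restrict_of_forall_mem measurableSet_Ioi fun t ht =>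
      (integral_eq_zero_iff_of_nonneg (hnn t) (hint t ht)).mp (hzero t ht)
  have hpath : ∀ᵐ ω ∂μ, ∀ᵐ t ∂volume.restrict (Ioi 0), g t ω = 0 :=
    (Measure.ae_ae_comm (p := fun ω t => g t ω = 0)
      ((hg.comp measurable_swap) (measurableSet_singleton 0))).mpr hslice
  filter_upwards [hpath] with ω hω T
  exact integral_eq_zero_of_ae (ae_restrict_of_ae_restrict_of_subset Ioc_subset_Ioi_self hω)

end TimeAverage

theorem stmt_12_general
    {Ω : Type*} [MeasurableSpace Ω] (P : Measure Ω) [IsProbabilityMeasure P]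
    (g : ℝ → Ω → ℝ) (Z : Ω → ℝ)
    (hgmeas : Measurable (Function.uncurry g))
    (hgnn : ∀ t ω, 0 ≤ g t ω)
    (hgint : ∀ t : ℝ, 0 ≤ t → Integrable (g t) P)
    -- (a) a.s. convergence of the time averages to Z
    (ha : ∀ᵐ ω ∂P, Tendsto (fun T : ℝ => T⁻¹ * ∫ t in Ioc (0:ℝ) T, g t ω)
      atTop (nhds (Z ω)))
    -- (b) uniform integrability of the family of time averages
    (hb : UniformIntegrable
      (fun T : {T : ℝ // 0 < T} => fun ω => (T : ℝ)⁻¹ * ∫ t in Ioc (0:ℝ) (T : ℝ), g t ω)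
      1 P)
    -- (c) stationarity of E[g_t 1_A]
    (hc : ∀ s t : ℝ, 0 ≤ s → 0 ≤ t →
      ∫ ω in {ω | Z ω = 0}, g s ω ∂P = ∫ ω in {ω | Z ω = 0}, g t ω ∂P)
    -- (d) a.s. positivity of the supremum of the integrals
    (hd : ∀ᵐ ω ∂P, ∃ T > (0:ℝ), 0 < ∫ t in Ioc (0:ℝ) T, g t ω) :
    P {ω | Z ω = 0} = 0 := by
  set A := {ω | Z ω = 0}
  set c := ∫ ω in A, g 0 ω ∂P
  let T : ℕ → {T : ℝ // 0 < T} := fun n => ⟨n + 1, n.cast_add_one_pos⟩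
  have hT : Tendsto (fun n => (T n : ℝ)) atTop atTop :=
    tendsto_atTop_add_const_right _ 1 tendsto_natCast_atTop_atTop
  have hlim := (hb.comp T).tendsto_setIntegral_of_ae_tendsto
    (ha.mono fun ω hω => hω.comp hT) A
  have hconst : ∀ n, ∫ ω in A, (T n : ℝ)⁻¹ * (∫ t in Ioc (0:ℝ) (T n : ℝ), g t ω) ∂P = c :=
    fun n =>
    integral_timeAverage_eq_of_integral_eq_const (T n).2 hgmeas hgnn
      (fun t ht => (hgint t ht.1.le).restrict) (fun t ht => hc t 0 ht.1.le le_rfl)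
  have hc0 : c = 0 := by
    have hZA : ∫ ω in A, Z ω ∂P = 0 := setIntegral_eq_zero_of_forall_eq_zero fun ω hω => hω
    rw [hZA] at hlim
    exact tendsto_nhds_unique (tendsto_const_nhds.congr fun n => (hconst n).symm) hlim
  have hpaths := ae_forall_setIntegral_Ioc_eq_zero (μ := P.restrict A) hgmeas hgnn
    (fun t ht => (hgint t ht.le).restrict) (fun t ht => (hc t 0 ht.le le_rfl).trans hc0)
  rw [← Measure.restrict_eq_zero, ← ae_eq_bot, ← eventually_false_iff_eq_bot]
  filter_upwards [ae_restrict_of_ae hd, hpaths] with ω hpos hω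
  obtain ⟨S, -, hS⟩ := hpos
  exact hS.ne' (hω S)

/-- if `(1/T)∫₀^T g_t dt → Z` a.s., the family `{(1/T)∫₀^T g_t dt : T > 0}`
is uniformly integrable, `E[g_s 1_A] = E[g_t 1_A]` for all `s,t ≥ 0` where `A = {Z = 0}`,
and a.s. `sup_{T>0} ∫₀^T g_t dt > 0`, then `P(A) = 0`, i.e. `Z > 0` a.s. -/
theorem stmt_12
    {Ω : Type*} [MeasurableSpace Ω] (P : Measure Ω) [IsProbabilityMeasure P]
    (g : ℝ → Ω → ℝ) (Z : Ω → ℝ)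
    (hgmeas : Measurable (Function.uncurry g))
    (hgnn : ∀ t ω, 0 ≤ g t ω)
    (hgint : ∀ t : ℝ, 0 ≤ t → Integrable (g t) P)
    (hZnn : ∀ ω, 0 ≤ Z ω)
    -- (a) a.s. convergence of the time averages to Z
    (ha : ∀ᵐ ω ∂P, Tendsto (fun T : ℝ => T⁻¹ * ∫ t in Ioc (0:ℝ) T, g t ω)
      atTop (nhds (Z ω)))
    -- (b) uniform integrability of the family of time averages
    (hb : UniformIntegrable
      (fun T : {T : ℝ // 0 < T} => fun ω => (T : ℝ)⁻¹ * ∫ t in Ioc (0:ℝ) (T : ℝ), g t ω)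
      1 P)
    -- (c) stationarity of E[g_t 1_A]
    (hc : ∀ s t : ℝ, 0 ≤ s → 0 ≤ t →
      ∫ ω in {ω | Z ω = 0}, g s ω ∂P = ∫ ω in {ω | Z ω = 0}, g t ω ∂P)
    -- (d) a.s. positivity of the supremum of the integrals
    (hd : ∀ᵐ ω ∂P, ∃ T > (0:ℝ), 0 < ∫ t in Ioc (0:ℝ) T, g t ω) :
    P {ω | Z ω = 0} = 0 :=
  stmt_12_general P g Z hgmeas hgnn hgint ha hb hc hd
end
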